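/- Let π : X → M be a smooth surjective map of diffeological spaces equipped with a path-lifting L, let x ∈ X and m = π(x). Then the quotient Hol_x^L = 𝓛(m;M)/∼, endowed with the operations induced by concatenation ∨ and inversion γ ↦ γ⁻¹ of loops, is a group, whose identity element is the class 𝓛₀^L(m;M); moreover, for the diffeology pushed forward from 𝓛(m;M) by the quotient projection, the induced operations ∨ and ⁻¹ on Hol_x^L are smooth, so (Hol_x^L, ∨) is a diffeological group. -/

import Mathlib

open Set

/-- Euclidean space `ℝⁿ`. -/
abbrev Eucl (n : ℕ) : Type := EuclideanSpace ℝ (Fin n)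

/-- A system of parametrizations ("plots") on `X`: for each `n`, a predicate
`P O f` read as: the restriction of `f : ℝⁿ → X` to the domain `O ⊆ ℝⁿ` is a plot. -/
abbrev PlotsOn (X : Type*) : Type _ := ∀ ⦃n : ℕ⦄, Set (Eucl n) → (Eucl n → X) → Prop

/-- `P` is a diffeology on `X` (Souriau). -/
structure IsDiffeology {X : Type*} (P : PlotsOn X) : Prop where
  isOpen_dom : ∀ {n : ℕ} {O : Set (Eucl n)} {f : Eucl n → X}, P O f → IsOpen O
  congr : ∀ {n : ℕ} {O : Set (Eucl n)} {f g : Eucl n → X}, Set.EqOn f g O → P O f → P O g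
  const_mem : ∀ {n : ℕ} {O : Set (Eucl n)}, IsOpen O → ∀ x : X, P O fun _ => x
  locality : ∀ {n : ℕ} (S : Set (Set (Eucl n))) (f : Eucl n → X),
      (∀ O ∈ S, P O f) → P (⋃₀ S) f
  smooth_comp : ∀ {p q : ℕ} {O : Set (Eucl p)} {O' : Set (Eucl q)}
      {f : Eucl p → X} {g : Eucl q → Eucl p},
      P O f → IsOpen O' → ContDiffOn ℝ (⊤ : ℕ∞) g O' → Set.MapsTo g O' O → P O' (f ∘ g)

/-- Smooth maps between diffeological spaces. -/
def DSmooth {X X' : Type*} (P : PlotsOn X) (P' : PlotsOn X') (φ : X → X') : Prop :=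
  ∀ {n : ℕ} {O : Set (Eucl n)} {p : Eucl n → X}, P O p → P' O (φ ∘ p)

/-- Frölicher space structure on `X`. -/
structure IsFrolicher {X : Type*} (F : Set (X → ℝ)) (C : Set (ℝ → X)) : Prop where
  mem_F_iff : ∀ f : X → ℝ, f ∈ F ↔ ∀ c ∈ C, ContDiff ℝ (⊤ : ℕ∞) (f ∘ c)
  mem_C_iff : ∀ c : ℝ → X, c ∈ C ↔ ∀ f ∈ F, ContDiff ℝ (⊤ : ℕ∞) (f ∘ c)

/-- Smooth maps between Frölicher spaces. -/
def FSmooth {X X' : Type*} (F : Set (X → ℝ)) (C : Set (ℝ → X))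
    (F' : Set (X' → ℝ)) (_C' : Set (ℝ → X')) (φ : X → X') : Prop :=
  ∀ f' ∈ F', ∀ c ∈ C, ContDiff ℝ (⊤ : ℕ∞) (f' ∘ φ ∘ c)

/-- The natural diffeology `𝒫(ℱ)` of a Frölicher space. -/
def natPlots {X : Type*} (F : Set (X → ℝ)) : PlotsOn X :=
  fun _n O p => IsOpen O ∧ ∀ f ∈ F, ContDiffOn ℝ (⊤ : ℕ∞) (f ∘ p) O

/-- Contours generated by a family of functions `Fg`. -/
def genC {X : Type*} (Fg : Set (X → ℝ)) : Set (ℝ → X) :=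
  {c | ∀ f ∈ Fg, ContDiff ℝ (⊤ : ℕ∞) (f ∘ c)}

/-- Functions of the Frölicher structure generated by a family of functions `Fg`. -/
def genF {X : Type*} (Fg : Set (X → ℝ)) : Set (X → ℝ) :=
  {f | ∀ c ∈ genC Fg, ContDiff ℝ (⊤ : ℕ∞) (f ∘ c)}

section PathLifting

/-- Reversal `γ⁻¹` of a path: `γ⁻¹(t) = γ(1 − t)`. -/
def pathInv {M : Type*} (γ : ℝ → M) : ℝ → M := fun t => γ (1 - t)

/-- Concatenation `a ∨ b` of two paths (stationary at their endpoints):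
traverse `b` first, then `a`. -/
noncomputable def pathConcat {M : Type*} (a b : ℝ → M) : ℝ → M :=
  fun t => if t ≤ 1 / 2 then b (2 * t) else a (2 * t - 1)

/-- A path (parametrized by `ℝ`, regarded through its restriction to `[0,1]`) is
stationary at its endpoints if it is constant near `0` and near `1`. -/
def StationaryPath {M : Type*} (γ : ℝ → M) : Prop :=
  (∃ ε > (0:ℝ), ∀ t ≤ ε, γ t = γ 0) ∧ (∃ ε > (0:ℝ), ∀ t ≥ 1 - ε, γ t = γ 1)

/-- A smooth path on a diffeological space: a `1`-plot defined on all of `ℝ`. -/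
def IsSmoothPath {M : Type*} (PM : PlotsOn M) (γ : ℝ → M) : Prop :=
  PM (Set.univ : Set (Eucl 1)) (fun z => γ (z 0))

/-- A smooth loop based at `m`, stationary at its endpoints. -/
def IsLoopAt {M : Type*} (PM : PlotsOn M) (m : M) (γ : ℝ → M) : Prop :=
  IsSmoothPath PM γ ∧ StationaryPath γ ∧ γ 0 = m ∧ γ 1 = m

/-- A path-lifting on the smooth surjection `π : X → M`: a smooth assignment
`(γ, x) ↦ L γ x` of paths of `X` to pairs of a smooth path `γ` of `M` and a point
`x ∈ π⁻¹(γ 0)`, satisfying the axioms (i)–(vi) of Definition `pl` of the paper. -/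
structure IsPathLifting {X M : Type*} (PX : PlotsOn X) (PM : PlotsOn M) (π : X → M)
    (L : (ℝ → M) → X → ℝ → X) : Prop where
  /-- `L` is smooth: it maps smooth families of (paths, initial points) to smooth
  families of paths (smoothness is tested on finite-dimensional plots, by
  cartesian closedness). -/
  smooth : ∀ {n : ℕ} {O : Set (Eucl n)} (γ : Eucl n → ℝ → M) (ξ : Eucl n → X),
      PM {z : Eucl (n+1) | (WithLp.toLp 2 (fun i : Fin n => z i.castSucc)) ∈ O}
        (fun z => γ (WithLp.toLp 2 (fun i : Fin n => z i.castSucc)) (z (Fin.last n))) →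
      PX O ξ → (∀ z ∈ O, π (ξ z) = γ z 0) →
      PX {z : Eucl (n+1) | (WithLp.toLp 2 (fun i : Fin n => z i.castSucc)) ∈ O}
        (fun z => L (γ (WithLp.toLp 2 (fun i : Fin n => z i.castSucc))) (ξ (WithLp.toLp 2 (fun i : Fin n => z i.castSucc))) (z (Fin.last n)))
  /-- liftings are smooth paths -/
  lift_isPath : ∀ γ x, IsSmoothPath PM γ → π x = γ 0 → IsSmoothPath PX (L γ x)
  /-- (i) `π ∘ L_x(γ) = γ` -/
  lift_proj : ∀ γ x, IsSmoothPath PM γ → π x = γ 0 → ∀ t, π (L γ x t) = γ t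
  /-- (ii) `L_x(γ' ∨ γ'') = L_{L_x(γ'')(1)}(γ') ∨ L_x(γ'')` -/
  lift_concat : ∀ γ' γ'' x, IsSmoothPath PM γ' → IsSmoothPath PM γ'' →
      StationaryPath γ' → StationaryPath γ'' → γ'' 1 = γ' 0 → π x = γ'' 0 →
      L (pathConcat γ' γ'') x = pathConcat (L γ' (L γ'' x 1)) (L γ'' x)
  /-- (iii) `L_x(γ ∘ g) = L_x(γ) ∘ g` for `g : [0,1] → [0,1]` smooth monotone -/
  lift_reparam : ∀ γ x (g : ℝ → ℝ), IsSmoothPath PM γ → π x = γ 0 →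
      ContDiff ℝ (⊤ : ℕ∞) g → Monotone g → Set.MapsTo g (Set.Icc (0:ℝ) 1) (Set.Icc (0:ℝ) 1) →
      L (γ ∘ g) x = (L γ x) ∘ g
  /-- (iv) `L_x(γ⁻¹ ∨ γ)(1) = x` -/
  lift_inv_concat : ∀ γ x, IsSmoothPath PM γ → StationaryPath γ → π x = γ 0 →
      L (pathConcat (pathInv γ) γ) x 1 = x
  /-- (v) `L_x(γ)(0) = x` -/
  lift_start : ∀ γ x, IsSmoothPath PM γ → π x = γ 0 → L γ x 0 = x
  /-- (vi) if `L_x(γ)(1) = x` for some `x ∈ π⁻¹(γ 0)` then for every such `x` -/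
  loop_exists_iff : ∀ γ, IsSmoothPath PM γ → γ 1 = γ 0 →
      (∃ x, π x = γ 0 ∧ L γ x 1 = x) → ∀ x, π x = γ 0 → L γ x 1 = x

/-- The relation `γ ∼ γ'` on loops based at `m`: the liftings from some point of the
fiber `π⁻¹(m)` have the same endpoint. -/
def simRel {X M : Type*} (L : (ℝ → M) → X → ℝ → X) (π : X → M) (m : M)
    (γ γ' : ℝ → M) : Prop :=
  ∃ x, π x = m ∧ L γ x 1 = L γ' x 1

/-- Membership in `𝓛₀^L(m;M)`: a loop based at `m` whose lifting from some point
of the fiber is again a loop. -/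
def IsNullLoop {X M : Type*} (L : (ℝ → M) → X → ℝ → X) (π : X → M)
    (PM : PlotsOn M) (m : M) (γ : ℝ → M) : Prop :=
  IsLoopAt PM m γ ∧ ∃ x, π x = m ∧ L γ x 1 = x

end PathLifting

/-- The push-forward of a plot system `P` by a map `φ : X → X'`. -/
def pushforwardPlots {X X' : Type*} (P : PlotsOn X) (φ : X → X') : PlotsOn X' :=
  fun n O u => IsOpen O ∧ ∀ x ∈ O, ∃ V : Set (Eucl n), IsOpen V ∧ x ∈ V ∧ V ⊆ O ∧
    ∃ p : Eucl n → X, P V p ∧ Set.EqOn u (φ ∘ p) V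

/-- The product plot system on `X × X'`. -/
def prodPlots {X X' : Type*} (P : PlotsOn X) (P' : PlotsOn X') : PlotsOn (X × X') :=
  fun _n O g => P O (fun z => (g z).1) ∧ P' O (fun z => (g z).2)

/-- The space of smooth loops of `M` based at `m`, stationary at endpoints. -/
def LoopSp {M : Type*} (PM : PlotsOn M) (m : M) : Type _ := {γ : ℝ → M // IsLoopAt PM m γ}

/-- The functional diffeology of the loop space `𝓛(m;M)`: plots are families of
loops whose joint evaluation map is a plot of `M`. -/
def loopPlots {M : Type*} (PM : PlotsOn M) (m : M) : PlotsOn (LoopSp PM m) :=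
  fun n O q => IsOpen O ∧
    PM {z : Eucl (n+1) | (WithLp.toLp 2 (fun i : Fin n => z i.castSucc)) ∈ O}
      (fun z => (q (WithLp.toLp 2 (fun i : Fin n => z i.castSucc))).val (z (Fin.last n)))

/-- The holonomy relation `∼` on the loop space. -/
def holRel {X M : Type*} (L : (ℝ → M) → X → ℝ → X) (π : X → M)
    (PM : PlotsOn M) (m : M) : LoopSp PM m → LoopSp PM m → Prop :=
  fun a b => simRel L π m a.val b.val

/-- The holonomy group `Hol_x^L = 𝓛(m;M)/∼`. -/
def HolGrp {X M : Type*} (L : (ℝ → M) → X → ℝ → X) (π : X → M)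
    (PM : PlotsOn M) (m : M) : Type _ := Quot (holRel L π PM m)

section HolonomyAux

/-! ### Euclidean helper maps -/

noncomputable def hSetLast (n : ℕ) (ψ : ℝ → ℝ) : Eucl (n+1) → Eucl (n+1) :=
  fun z => WithLp.toLp 2 (fun i => if i = Fin.last n then ψ (z (Fin.last n)) else z i)

lemma hSetLast_contDiff (n : ℕ) (ψ : ℝ → ℝ) (hψ : ContDiff ℝ (⊤ : ℕ∞) ψ) :
    ContDiff ℝ (⊤ : ℕ∞) (hSetLast n ψ) := by
  apply contDiff_euclidean.2
  intro i
  by_cases h : i = Fin.last n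
  · simp only [hSetLast, PiLp.toLp_apply, h, if_pos]
    exact hψ.comp (EuclideanSpace.proj (𝕜 := ℝ) (Fin.last n)).contDiff
  · simp only [hSetLast, PiLp.toLp_apply, h, if_false]
    exact (EuclideanSpace.proj (𝕜 := ℝ) i).contDiff

lemma hSetLast_castSucc (n : ℕ) (ψ : ℝ → ℝ) (z : Eucl (n+1)) (i : Fin n) :
    hSetLast n ψ z i.castSucc = z i.castSucc := by
  simp [hSetLast, (Fin.castSucc_lt_last i).ne]

lemma hSetLast_last (n : ℕ) (ψ : ℝ → ℝ) (z : Eucl (n+1)) :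
    hSetLast n ψ z (Fin.last n) = ψ (z (Fin.last n)) := by
  simp [hSetLast]

noncomputable def hProj (n : ℕ) : Eucl (n+1) → Eucl n := fun z => WithLp.toLp 2 (WithLp.toLp 2 (fun i : Fin n => z i.castSucc))

lemma hProj_contDiff (n : ℕ) : ContDiff ℝ (⊤ : ℕ∞) (hProj n) :=
  contDiff_euclidean.2 fun i => (EuclideanSpace.proj (𝕜 := ℝ) i.castSucc).contDiff

lemma isOpen_hcyl {n : ℕ} {V : Set (Eucl n)} (hV : IsOpen V) :
    IsOpen {z : Eucl (n+1) | (WithLp.toLp 2 (fun i : Fin n => z i.castSucc)) ∈ V} :=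
  hV.preimage (hProj_contDiff n).continuous

noncomputable def hOne (ψ : ℝ → ℝ) : Eucl 1 → Eucl 1 := fun z => WithLp.toLp 2 (fun _ => ψ (z 0))

lemma hOne_contDiff (ψ : ℝ → ℝ) (hψ : ContDiff ℝ (⊤ : ℕ∞) ψ) : ContDiff ℝ (⊤ : ℕ∞) (hOne ψ) :=
  contDiff_euclidean.2 fun _ => hψ.comp (EuclideanSpace.proj (𝕜 := ℝ) (0 : Fin 1)).contDiff

/-! ### Plot manipulation -/

lemma plot_mono {M : Type*} {PM : PlotsOn M} (hPM : IsDiffeology PM) {n : ℕ}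
    {W W' : Set (Eucl n)} {f : Eucl n → M} (h : PM W f) (hW' : IsOpen W') (hsub : W' ⊆ W) :
    PM W' f := by
  have := hPM.smooth_comp h hW' contDiffOn_id (fun z hz => hsub hz)
  exact this

lemma plot_reparam {M : Type*} {PM : PlotsOn M} (hPM : IsDiffeology PM) {n : ℕ}
    {V : Set (Eucl n)} {q : Eucl n → ℝ → M} {ψ : ℝ → ℝ} (hψ : ContDiff ℝ (⊤ : ℕ∞) ψ)
    (h : PM {z : Eucl (n+1) | (WithLp.toLp 2 (fun i : Fin n => z i.castSucc)) ∈ V}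
      (fun z => q (WithLp.toLp 2 (fun i : Fin n => z i.castSucc)) (z (Fin.last n)))) :
    PM {z : Eucl (n+1) | (WithLp.toLp 2 (fun i : Fin n => z i.castSucc)) ∈ V}
      (fun z => q (WithLp.toLp 2 (fun i : Fin n => z i.castSucc)) (ψ (z (Fin.last n)))) := by
  have hW : IsOpen {z : Eucl (n+1) | (WithLp.toLp 2 (fun i : Fin n => z i.castSucc)) ∈ V} := hPM.isOpen_dom h
  have hmaps : Set.MapsTo (hSetLast n ψ) {z : Eucl (n+1) | (WithLp.toLp 2 (fun i : Fin n => z i.castSucc)) ∈ V}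
      {z : Eucl (n+1) | (WithLp.toLp 2 (fun i : Fin n => z i.castSucc)) ∈ V} := by
    intro z hz
    have hc : (fun i : Fin n => hSetLast n ψ z i.castSucc) = (fun i => z i.castSucc) :=
      funext fun i => hSetLast_castSucc n ψ z i
    show WithLp.toLp 2 (fun i : Fin n => hSetLast n ψ z i.castSucc) ∈ V
    rw [hc]; exact hz
  have h2 := hPM.smooth_comp h hW (hSetLast_contDiff n ψ hψ).contDiffOn hmaps
  refine hPM.congr (fun z _ => ?_) h2
  have hc : (fun i : Fin n => hSetLast n ψ z i.castSucc) = (fun i => z i.castSucc) :=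
    funext fun i => hSetLast_castSucc n ψ z i
  show q (WithLp.toLp 2 (fun i : Fin n => hSetLast n ψ z i.castSucc)) (hSetLast n ψ z (Fin.last n)) = _
  rw [hc, hSetLast_last]

lemma concat_plot {M : Type*} {PM : PlotsOn M} (hPM : IsDiffeology PM) {k : ℕ}
    {W : Set (Eucl k)} (τ : Eucl k → ℝ) (hτ : Continuous τ)
    (a b : Eucl k → ℝ → M) {ε : ℝ} (hε : 0 < ε)
    (pa : ∀ c d : ℝ, PM W (fun z => a z (c * τ z + d)))
    (pb : ∀ c d : ℝ, PM W (fun z => b z (c * τ z + d)))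
    (hsa : ∀ z ∈ W, ∀ t ≤ ε, a z t = a z 0)
    (hsb : ∀ z ∈ W, ∀ t, 1 - ε ≤ t → b z t = b z 1)
    (hab : ∀ z ∈ W, b z 1 = a z 0) :
    PM W (fun z => pathConcat (a z) (b z) (τ z)) := by
  have hW : IsOpen W := hPM.isOpen_dom (pa 1 0)
  have hAopen : IsOpen (W ∩ {z | τ z < 1/2 + ε/2}) := hW.inter (isOpen_lt hτ continuous_const)
  have hBopen : IsOpen (W ∩ {z | 1/2 - ε/2 < τ z}) := hW.inter (isOpen_lt continuous_const hτ)
  have hPA : PM (W ∩ {z | τ z < 1/2 + ε/2}) (fun z => pathConcat (a z) (b z) (τ z)) := by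
    refine hPM.congr (fun z hz => ?_) (plot_mono hPM (pb 2 0) hAopen Set.inter_subset_left)
    obtain ⟨hzW, hzb⟩ := hz
    simp only [Set.mem_setOf_eq] at hzb
    unfold pathConcat
    by_cases h : τ z ≤ 1/2
    · rw [if_pos h]; norm_num
    · push_neg at h
      rw [if_neg (not_le.2 h)]
      rw [hsb z hzW (2 * τ z + 0) (by linarith), hsa z hzW (2 * τ z - 1) (by linarith),
        hab z hzW]
  have hPB : PM (W ∩ {z | 1/2 - ε/2 < τ z}) (fun z => pathConcat (a z) (b z) (τ z)) := by
    refine hPM.congr (fun z hz => ?_) (plot_mono hPM (pa 2 (-1)) hBopen Set.inter_subset_left)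
    obtain ⟨hzW, hza⟩ := hz
    simp only [Set.mem_setOf_eq] at hza
    unfold pathConcat
    by_cases h : τ z ≤ 1/2
    · rw [if_pos h]
      rw [hsa z hzW (2 * τ z + (-1)) (by linarith), hsb z hzW (2 * τ z) (by linarith),
        hab z hzW]
    · rw [if_neg h]
      have harg : 2 * τ z + (-1) = 2 * τ z - 1 := by ring
      rw [harg]
  have hcover : ⋃₀ {W ∩ {z | τ z < 1/2 + ε/2}, W ∩ {z | 1/2 - ε/2 < τ z}} = W := by
    rw [Set.sUnion_pair]
    apply Set.Subset.antisymm (Set.union_subset Set.inter_subset_left Set.inter_subset_left)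
    intro z hz
    by_cases h : τ z ≤ 1/2
    · exact Or.inl ⟨hz, by simp only [Set.mem_setOf_eq]; linarith⟩
    · push_neg at h
      exact Or.inr ⟨hz, by simp only [Set.mem_setOf_eq]; linarith⟩
  have hloc := hPM.locality {W ∩ {z | τ z < 1/2 + ε/2}, W ∩ {z | 1/2 - ε/2 < τ z}}
    (fun z => pathConcat (a z) (b z) (τ z)) ?_
  · rwa [hcover] at hloc
  · rintro O hO
    rcases Set.mem_insert_iff.1 hO with rfl | h1
    · exact hPA
    · rcases Set.mem_singleton_iff.1 h1 with rfl
      exact hPB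

end HolonomyAux

section HolonomyAux2

/-! ### Smooth paths and loops -/

lemma isSmoothPath_comp {M : Type*} {PM : PlotsOn M} (hPM : IsDiffeology PM) {γ : ℝ → M}
    (hγ : IsSmoothPath PM γ) {ψ : ℝ → ℝ} (hψ : ContDiff ℝ (⊤ : ℕ∞) ψ) :
    IsSmoothPath PM (fun t => γ (ψ t)) := by
  have := hPM.smooth_comp hγ isOpen_univ (hOne_contDiff ψ hψ).contDiffOn
    (Set.mapsTo_univ _ _)
  exact this

lemma loop_outside {M : Type*} {PM : PlotsOn M} {m : M} {γ : ℝ → M} (h : IsLoopAt PM m γ) :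
    ∀ t : ℝ, t ≤ 0 ∨ 1 ≤ t → γ t = m := by
  obtain ⟨-, ⟨⟨ε1, hε1, h0⟩, ⟨ε2, hε2, h1⟩⟩, hg0, hg1⟩ := h
  rintro t (ht | ht)
  · rw [h0 t (le_trans ht hε1.le), hg0]
  · rw [h1 t (by linarith), hg1]

lemma isLoopAt_const {M : Type*} {PM : PlotsOn M} (hPM : IsDiffeology PM) (m : M) :
    IsLoopAt PM m (fun _ => m) :=
  ⟨hPM.const_mem isOpen_univ m, ⟨⟨1, one_pos, fun _ _ => rfl⟩, ⟨1, one_pos, fun _ _ => rfl⟩⟩,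
    rfl, rfl⟩

lemma isLoopAt_inv {M : Type*} {PM : PlotsOn M} (hPM : IsDiffeology PM) {m : M} {γ : ℝ → M}
    (h : IsLoopAt PM m γ) : IsLoopAt PM m (pathInv γ) := by
  obtain ⟨hs, ⟨⟨ε1, hε1, h0⟩, ⟨ε2, hε2, h1⟩⟩, hg0, hg1⟩ := h
  have hψ : ContDiff ℝ (⊤ : ℕ∞) (fun t : ℝ => 1 - t) := contDiff_const.sub contDiff_id
  refine ⟨isSmoothPath_comp hPM hs hψ,
    ⟨⟨ε2, hε2, fun t ht => ?_⟩, ⟨ε1, hε1, fun t ht => ?_⟩⟩, ?_, ?_⟩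
  · show γ (1 - t) = γ (1 - 0)
    rw [h1 (1 - t) (by linarith), h1 (1 - 0) (by linarith)]
  · show γ (1 - t) = γ (1 - 1)
    rw [h0 (1 - t) (by linarith), h0 (1 - 1) (by linarith)]
  · show γ (1 - 0) = m
    rw [h1 (1 - 0) (by linarith), hg1]
  · show γ (1 - 1) = m
    rw [h0 (1 - 1) (by linarith), hg0]

lemma pathInv_pathInv {M : Type*} (γ : ℝ → M) : pathInv (pathInv γ) = γ := by
  funext t
  show γ (1 - (1 - t)) = γ t
  congr 1
  ring

/-- The flattening reparametrization of a loop. -/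
def flatL {M : Type*} (γ : ℝ → M) : ℝ → M := fun t => γ (4*t - 1)

lemma isLoopAt_flat {M : Type*} {PM : PlotsOn M} (hPM : IsDiffeology PM) {m : M} {γ : ℝ → M}
    (h : IsLoopAt PM m γ) : IsLoopAt PM m (flatL γ) := by
  have hψ : ContDiff ℝ (⊤ : ℕ∞) (fun t : ℝ => 4*t - 1) :=
    (contDiff_const.mul contDiff_id).sub contDiff_const
  refine ⟨isSmoothPath_comp hPM h.1 hψ,
    ⟨⟨1/4, by norm_num, fun t ht => ?_⟩, ⟨1/4, by norm_num, fun t ht => ?_⟩⟩, ?_, ?_⟩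
  · show γ (4*t - 1) = γ (4*0 - 1)
    rw [loop_outside h _ (Or.inl (by linarith)), loop_outside h _ (Or.inl (by norm_num))]
  · show γ (4*t - 1) = γ (4*1 - 1)
    rw [loop_outside h _ (Or.inr (by linarith)), loop_outside h _ (Or.inr (by norm_num))]
  · show γ (4*0 - 1) = m
    exact loop_outside h _ (Or.inl (by norm_num))
  · show γ (4*1 - 1) = m
    exact loop_outside h _ (Or.inr (by norm_num))

lemma flatL_eq {M : Type*} {PM : PlotsOn M} {m : M} {γ : ℝ → M} (h : IsLoopAt PM m γ) :
    flatL γ = pathConcat (fun _ => m) (pathConcat γ (fun _ => m)) := by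
  funext t
  show γ (4*t - 1) = _
  unfold pathConcat
  by_cases h1 : t ≤ 1/2
  · rw [if_pos h1]
    by_cases h2 : 2*t ≤ 1/2
    · rw [if_pos h2, loop_outside h _ (Or.inl (by linarith))]
    · rw [if_neg h2]
      congr 1
      ring
  · rw [if_neg h1, loop_outside h _ (Or.inr (by linarith))]

lemma isLoopAt_pathConcat {M : Type*} {PM : PlotsOn M} (hPM : IsDiffeology PM) {m : M}
    {γ' γ'' : ℝ → M} (h' : IsLoopAt PM m γ') (h'' : IsLoopAt PM m γ'') :
    IsLoopAt PM m (pathConcat γ' γ'') := by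
  obtain ⟨hs', ⟨⟨ε1, hε1, h'0⟩, ⟨ε2, hε2, h'1⟩⟩, hg'0, hg'1⟩ := h'
  obtain ⟨hs'', ⟨⟨ε3, hε3, h''0⟩, ⟨ε4, hε4, h''1⟩⟩, hg''0, hg''1⟩ := h''
  have pa : ∀ c d : ℝ, PM (Set.univ : Set (Eucl 1)) (fun z => γ' (c * z 0 + d)) := by
    intro c d
    have hψ : ContDiff ℝ (⊤ : ℕ∞) (fun t : ℝ => c * t + d) :=
      (contDiff_const.mul contDiff_id).add contDiff_const
    exact isSmoothPath_comp hPM hs' hψ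
  have pb : ∀ c d : ℝ, PM (Set.univ : Set (Eucl 1)) (fun z => γ'' (c * z 0 + d)) := by
    intro c d
    have hψ : ContDiff ℝ (⊤ : ℕ∞) (fun t : ℝ => c * t + d) :=
      (contDiff_const.mul contDiff_id).add contDiff_const
    exact isSmoothPath_comp hPM hs'' hψ
  have hsmooth : IsSmoothPath PM (pathConcat γ' γ'') := by
    have hmin1 := min_le_left ε1 ε4
    have hmin4 := min_le_right ε1 ε4
    exact concat_plot hPM (fun z : Eucl 1 => z 0)
      ((EuclideanSpace.proj (𝕜 := ℝ) (0 : Fin 1)).continuous)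
      (fun _ => γ') (fun _ => γ'') (lt_min hε1 hε4) pa pb
      (fun _ _ t ht => h'0 t (by linarith))
      (fun _ _ t ht => h''1 t (by linarith))
      (fun _ _ => by show γ'' 1 = γ' 0; rw [hg''1, hg'0])
  refine ⟨hsmooth, ⟨⟨min ε3 1 / 2, by positivity, fun t ht => ?_⟩,
    ⟨min ε2 1 / 2, by positivity, fun t ht => ?_⟩⟩, ?_, ?_⟩
  · have hm1 := min_le_left ε3 1
    have hm2 := min_le_right ε3 1
    show (if t ≤ 1/2 then γ'' (2*t) else γ' (2*t - 1)) =
      (if (0:ℝ) ≤ 1/2 then γ'' (2*0) else γ' (2*0 - 1))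
    rw [if_pos (by linarith : t ≤ 1/2), if_pos (by norm_num : (0:ℝ) ≤ 1/2)]
    rw [h''0 (2*t) (by linarith), h''0 (2*0) (by linarith)]
  · have hm1 := min_le_left ε2 1
    have hm2 := min_le_right ε2 1
    show (if t ≤ 1/2 then γ'' (2*t) else γ' (2*t - 1)) =
      (if (1:ℝ) ≤ 1/2 then γ'' (2*1) else γ' (2*1 - 1))
    rw [if_neg (by norm_num : ¬ (1:ℝ) ≤ 1/2)]
    by_cases hcase : t ≤ 1/2
    · have hteq : t = 1/2 := le_antisymm hcase (by linarith)
      rw [if_pos hcase, hteq]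
      rw [show γ'' (2 * (1/2 : ℝ)) = γ'' 1 by norm_num, hg''1,
        show (2:ℝ)*1 - 1 = 1 by norm_num, hg'1]
    · rw [if_neg hcase, h'1 (2*t - 1) (by linarith), show (2:ℝ)*1 - 1 = 1 by norm_num]
  · show (if (0:ℝ) ≤ 1/2 then γ'' (2*0) else γ' (2*0 - 1)) = m
    rw [if_pos (by norm_num : (0:ℝ) ≤ 1/2), show (2:ℝ)*0 = 0 by norm_num, hg''0]
  · show (if (1:ℝ) ≤ 1/2 then γ'' (2*1) else γ' (2*1 - 1)) = m
    rw [if_neg (by norm_num : ¬ (1:ℝ) ≤ 1/2), show (2:ℝ)*1 - 1 = 1 by norm_num, hg'1]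

end HolonomyAux2

section HolonomyAux3

variable {X M : Type*} {PX : PlotsOn X} {PM : PlotsOn M} {π : X → M}
  {L : (ℝ → M) → X → ℝ → X} {m : M}

lemma fiber_end (hL : IsPathLifting PX PM π L) {γ : ℝ → M} {y : X}
    (hγ : IsLoopAt PM m γ) (hy : π y = m) : π (L γ y 1) = m := by
  rw [hL.lift_proj γ y hγ.1 (by rw [hy, hγ.2.2.1]) 1, hγ.2.2.2]

lemma L_concat_one (hL : IsPathLifting PX PM π L) {γ' γ'' : ℝ → M} {y : X}
    (h' : IsLoopAt PM m γ') (h'' : IsLoopAt PM m γ'') (hy : π y = m) :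
    L (pathConcat γ' γ'') y 1 = L γ' (L γ'' y 1) 1 := by
  have hcc := hL.lift_concat γ' γ'' y h'.1 h''.1 h'.2.1 h''.2.1
    (by rw [h''.2.2.2, h'.2.2.1]) (by rw [hy, h''.2.2.1])
  have h1 : L (pathConcat γ' γ'') y 1 = pathConcat (L γ' (L γ'' y 1)) (L γ'' y) 1 := by
    rw [hcc]
  rw [h1]
  show (if (1:ℝ) ≤ 1/2 then L γ'' y (2*1) else L γ' (L γ'' y 1) (2*1 - 1)) = _
  rw [if_neg (by norm_num : ¬ (1:ℝ) ≤ 1/2), show (2:ℝ)*1 - 1 = 1 by norm_num]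

lemma L_const_one (hPM : IsDiffeology PM) (hL : IsPathLifting PX PM π L) {y : X}
    (hy : π y = m) : L (fun _ => m) y 1 = y := by
  have hsp : IsSmoothPath PM (fun _ : ℝ => m) := hPM.const_mem isOpen_univ m
  have h := hL.lift_reparam (fun _ => m) y (fun _ => 0) hsp hy contDiff_const monotone_const
    (fun t _ => Set.left_mem_Icc.2 zero_le_one)
  have h1 : L (fun _ => m) y 1 = L (fun _ => m) y 0 := congrFun h 1
  rw [h1, hL.lift_start _ y hsp hy]

lemma L_inv_L (hPM : IsDiffeology PM) (hL : IsPathLifting PX PM π L) {γ : ℝ → M} {y : X}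
    (hγ : IsLoopAt PM m γ) (hy : π y = m) : L (pathInv γ) (L γ y 1) 1 = y := by
  have h1 := hL.lift_inv_concat γ y hγ.1 hγ.2.1 (by rw [hy, hγ.2.2.1])
  have h2 := L_concat_one hL (isLoopAt_inv hPM hγ) hγ hy
  rw [← h2, h1]

lemma L_L_inv (hPM : IsDiffeology PM) (hL : IsPathLifting PX PM π L) {γ : ℝ → M} {y : X}
    (hγ : IsLoopAt PM m γ) (hy : π y = m) : L γ (L (pathInv γ) y 1) 1 = y := by
  have h := L_inv_L hPM hL (isLoopAt_inv hPM hγ) hy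
  rwa [pathInv_pathInv] at h

lemma L_inj (hPM : IsDiffeology PM) (hL : IsPathLifting PX PM π L) {γ : ℝ → M} {y y' : X}
    (hγ : IsLoopAt PM m γ) (hy : π y = m) (hy' : π y' = m)
    (h : L γ y 1 = L γ y' 1) : y = y' := by
  have h1 := L_inv_L hPM hL hγ hy
  have h2 := L_inv_L hPM hL hγ hy'
  rw [← h1, ← h2, h]

lemma hol_indep (hPM : IsDiffeology PM) (hL : IsPathLifting PX PM π L)
    {γ γ' : ℝ → M} {y₀ y : X} (hγ : IsLoopAt PM m γ) (hγ' : IsLoopAt PM m γ')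
    (hy₀ : π y₀ = m) (h : L γ y₀ 1 = L γ' y₀ 1) (hy : π y = m) :
    L γ y 1 = L γ' y 1 := by
  have hc : IsLoopAt PM m (pathConcat (pathInv γ') γ) :=
    isLoopAt_pathConcat hPM (isLoopAt_inv hPM hγ') hγ
  have h1 : ∀ w, π w = m → L (pathConcat (pathInv γ') γ) w 1 = L (pathInv γ') (L γ w 1) 1 :=
    fun w hw => L_concat_one hL (isLoopAt_inv hPM hγ') hγ hw
  have h2 : L (pathConcat (pathInv γ') γ) y₀ 1 = y₀ := by
    rw [h1 y₀ hy₀, h, L_inv_L hPM hL hγ' hy₀]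
  have h3 := hL.loop_exists_iff _ hc.1 (by rw [hc.2.2.2, hc.2.2.1])
    ⟨y₀, by rw [hc.2.2.1]; exact hy₀, h2⟩ y (by rw [hc.2.2.1]; exact hy)
  have h5 : L (pathInv γ') (L γ y 1) 1 = y := by rw [← h1 y hy]; exact h3
  have h6 : L (pathInv γ') (L γ' y 1) 1 = y := L_inv_L hPM hL hγ' hy
  exact L_inj hPM hL (isLoopAt_inv hPM hγ') (fiber_end hL hγ hy) (fiber_end hL hγ' hy)
    (h5.trans h6.symm)

lemma L_flat_one (hPM : IsDiffeology PM) (hL : IsPathLifting PX PM π L) {γ : ℝ → M} {y : X}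
    (hγ : IsLoopAt PM m γ) (hy : π y = m) : L (flatL γ) y 1 = L γ y 1 := by
  have hck : IsLoopAt PM m (pathConcat γ (fun _ => m)) :=
    isLoopAt_pathConcat hPM hγ (isLoopAt_const hPM m)
  rw [flatL_eq hγ, L_concat_one hL (isLoopAt_const hPM m) hck hy,
    L_const_one hPM hL (fiber_end hL hck hy),
    L_concat_one hL hγ (isLoopAt_const hPM m) hy, L_const_one hPM hL hy]

/-! ### Loop space elements -/

noncomputable def cstLoop {M : Type*} {PM : PlotsOn M} (hPM : IsDiffeology PM) (m : M) :
    LoopSp PM m := ⟨fun _ => m, isLoopAt_const hPM m⟩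

noncomputable def invLp {M : Type*} {PM : PlotsOn M} {m : M} (hPM : IsDiffeology PM)
    (a : LoopSp PM m) : LoopSp PM m := ⟨pathInv a.val, isLoopAt_inv hPM a.2⟩

noncomputable def catLp {M : Type*} {PM : PlotsOn M} {m : M} (hPM : IsDiffeology PM)
    (a b : LoopSp PM m) : LoopSp PM m :=
  ⟨pathConcat (flatL a.val) (flatL b.val),
    isLoopAt_pathConcat hPM (isLoopAt_flat hPM a.2) (isLoopAt_flat hPM b.2)⟩

lemma L_cat_one (hPM : IsDiffeology PM) (hL : IsPathLifting PX PM π L)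
    (a b : LoopSp PM m) {y : X} (hy : π y = m) :
    L (catLp hPM a b).val y 1 = L a.val (L b.val y 1) 1 := by
  show L (pathConcat (flatL a.val) (flatL b.val)) y 1 = _
  rw [L_concat_one hL (isLoopAt_flat hPM a.2) (isLoopAt_flat hPM b.2) hy,
    L_flat_one hPM hL b.2 hy, L_flat_one hPM hL a.2 (fiber_end hL b.2 hy)]

end HolonomyAux3

/-- the quotient `Hol_x^L = 𝓛(m;M)/∼`, with the operations induced by
concatenation and inversion of loops, is a group whose identity element is the class
`𝓛₀^L(m;M)`, and these operations are smooth for the diffeology pushed forward from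
the (functional diffeology of the) loop space: `(Hol_x^L, ∨)` is a diffeological
group. -/
theorem holonomy_is_diffeological_group
    {X M : Type*} {PX : PlotsOn X} {PM : PlotsOn M}
    (hPX : IsDiffeology PX) (hPM : IsDiffeology PM)
    {π : X → M} (hsurj : Function.Surjective π) (hπ : DSmooth PX PM π)
    {L : (ℝ → M) → X → ℝ → X} (hL : IsPathLifting PX PM π L)
    (x : X) (m : M) (hx : π x = m) :
    ∃ (mul : HolGrp L π PM m → HolGrp L π PM m → HolGrp L π PM m)
      (inv : HolGrp L π PM m → HolGrp L π PM m) (e : HolGrp L π PM m),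
      -- mul and inv are induced by concatenation and inversion of loops
      (∀ a b c : LoopSp PM m, c.val = pathConcat a.val b.val →
        mul (Quot.mk _ a) (Quot.mk _ b) = Quot.mk _ c) ∧
      (∀ a b : LoopSp PM m, b.val = pathInv a.val →
        inv (Quot.mk _ a) = Quot.mk _ b) ∧
      -- the identity element is the class of the loops of 𝓛₀^L(m;M)
      (∀ a : LoopSp PM m, (Quot.mk _ a = e ↔ IsNullLoop L π PM m a.val)) ∧
      -- group laws
      (∀ p q r, mul (mul p q) r = mul p (mul q r)) ∧
      (∀ p, mul e p = p) ∧ (∀ p, mul p e = p) ∧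
      (∀ p, mul (inv p) p = e) ∧ (∀ p, mul p (inv p) = e) ∧
      -- smoothness of the operations for the push-forward diffeology
      DSmooth
        (prodPlots (pushforwardPlots (loopPlots PM m) (Quot.mk (holRel L π PM m)))
                   (pushforwardPlots (loopPlots PM m) (Quot.mk (holRel L π PM m))))
        (pushforwardPlots (loopPlots PM m) (Quot.mk (holRel L π PM m)))
        (fun pq => mul pq.1 pq.2) ∧
      DSmooth (pushforwardPlots (loopPlots PM m) (Quot.mk (holRel L π PM m)))
        (pushforwardPlots (loopPlots PM m) (Quot.mk (holRel L π PM m))) inv := by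
  classical
  have hwd : ∀ a b : LoopSp PM m, holRel L π PM m a b → L a.val x 1 = L b.val x 1 := by
    rintro a b ⟨x₀, hx₀, h⟩
    exact hol_indep hPM hL a.2 b.2 hx₀ h hx
  have qe : ∀ a b : LoopSp PM m,
      Quot.mk (holRel L π PM m) a = Quot.mk (holRel L π PM m) b ↔
        L a.val x 1 = L b.val x 1 := by
    intro a b
    constructor
    · intro h
      exact congrArg (Quot.lift (fun c : LoopSp PM m => L c.val x 1) hwd) h
    · intro h
      exact Quot.sound ⟨x, hx, h⟩
  have hr : ∀ (a b₁ b₂ : LoopSp PM m), holRel L π PM m b₁ b₂ →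
      holRel L π PM m (catLp hPM a b₁) (catLp hPM a b₂) := by
    intro a b₁ b₂ h
    refine ⟨x, hx, ?_⟩
    rw [L_cat_one hPM hL a b₁ hx, L_cat_one hPM hL a b₂ hx, hwd b₁ b₂ h]
  have hs : ∀ (a₁ a₂ b : LoopSp PM m), holRel L π PM m a₁ a₂ →
      holRel L π PM m (catLp hPM a₁ b) (catLp hPM a₂ b) := by
    intro a₁ a₂ b h
    refine ⟨x, hx, ?_⟩
    rw [L_cat_one hPM hL a₁ b hx, L_cat_one hPM hL a₂ b hx]
    exact hol_indep hPM hL a₁.2 a₂.2 hx (hwd a₁ a₂ h) (fiber_end hL b.2 hx)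
  have hi : ∀ (a b : LoopSp PM m), holRel L π PM m a b →
      holRel L π PM m (invLp hPM a) (invLp hPM b) := by
    intro a b h
    refine ⟨x, hx, ?_⟩
    show L (pathInv a.val) x 1 = L (pathInv b.val) x 1
    have hE := hwd a b h
    have h1 : L a.val (L (pathInv a.val) x 1) 1 = x := L_L_inv hPM hL a.2 hx
    have h2 : L b.val (L (pathInv b.val) x 1) 1 = x := L_L_inv hPM hL b.2 hx
    have h3 : L a.val (L (pathInv b.val) x 1) 1 = x := by
      rw [hol_indep hPM hL a.2 b.2 hx hE (fiber_end hL (isLoopAt_inv hPM b.2) hx)]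
      exact h2
    exact L_inj hPM hL a.2 (fiber_end hL (isLoopAt_inv hPM a.2) hx)
      (fiber_end hL (isLoopAt_inv hPM b.2) hx) (h1.trans h3.symm)
  refine ⟨Quot.map₂ (catLp hPM) hr hs,
    Quot.lift (fun a => Quot.mk (holRel L π PM m) (invLp hPM a))
      (fun a b h => Quot.sound (hi a b h)),
    Quot.mk (holRel L π PM m) (cstLoop hPM m), ?_, ?_, ?_, ?_, ?_, ?_, ?_, ?_, ?_, ?_⟩
  · -- mul induced by concatenation
    intro a b c hc
    rw [Quot.map₂_mk]
    refine (qe (catLp hPM a b) c).2 ?_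
    rw [L_cat_one hPM hL a b hx, hc, L_concat_one hL a.2 b.2 hx]
  · -- inv induced by inversion
    intro a b hb
    have hinv : invLp hPM a = b := Subtype.ext hb.symm
    show Quot.mk (holRel L π PM m) (invLp hPM a) = Quot.mk (holRel L π PM m) b
    rw [hinv]
  · -- identity element is the class of null loops
    intro a
    rw [qe a (cstLoop hPM m)]
    have hc1 : L (cstLoop hPM m).val x 1 = x := L_const_one hPM hL hx
    rw [hc1]
    constructor
    · intro h
      exact ⟨a.2, x, hx, h⟩
    · rintro ⟨hla, x₀, hx₀, hLx₀⟩
      exact hL.loop_exists_iff a.val a.2.1 (by rw [a.2.2.2.2, a.2.2.2.1])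
        ⟨x₀, by rw [a.2.2.2.1]; exact hx₀, hLx₀⟩ x (by rw [a.2.2.2.1]; exact hx)
  · -- associativity
    intro p q r
    induction p using Quot.ind with | _ a =>
    induction q using Quot.ind with | _ b =>
    induction r using Quot.ind with | _ c =>
    rw [Quot.map₂_mk, Quot.map₂_mk, Quot.map₂_mk, Quot.map₂_mk]
    refine (qe _ _).2 ?_
    rw [L_cat_one hPM hL (catLp hPM a b) c hx, L_cat_one hPM hL a b (fiber_end hL c.2 hx),
      L_cat_one hPM hL a (catLp hPM b c) hx, L_cat_one hPM hL b c hx]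
  · -- left identity
    intro p
    induction p using Quot.ind with | _ a =>
    rw [Quot.map₂_mk]
    refine (qe _ _).2 ?_
    rw [L_cat_one hPM hL (cstLoop hPM m) a hx]
    have hc1 : L (cstLoop hPM m).val (L a.val x 1) 1 = L a.val x 1 :=
      L_const_one hPM hL (fiber_end hL a.2 hx)
    rw [hc1]
  · -- right identity
    intro p
    induction p using Quot.ind with | _ a =>
    rw [Quot.map₂_mk]
    refine (qe _ _).2 ?_
    rw [L_cat_one hPM hL a (cstLoop hPM m) hx]
    have hc1 : L (cstLoop hPM m).val x 1 = x := L_const_one hPM hL hx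
    rw [hc1]
  · -- left inverse
    intro p
    induction p using Quot.ind with | _ a =>
    show Quot.map₂ (catLp hPM) hr hs
      (Quot.mk (holRel L π PM m) (invLp hPM a)) (Quot.mk (holRel L π PM m) a) = _
    rw [Quot.map₂_mk]
    refine (qe _ _).2 ?_
    rw [L_cat_one hPM hL (invLp hPM a) a hx]
    have h1 : L (invLp hPM a).val (L a.val x 1) 1 = x := L_inv_L hPM hL a.2 hx
    have hc1 : L (cstLoop hPM m).val x 1 = x := L_const_one hPM hL hx
    rw [h1, hc1]
  · -- right inverse
    intro p
    induction p using Quot.ind with | _ a =>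
    show Quot.map₂ (catLp hPM) hr hs
      (Quot.mk (holRel L π PM m) a) (Quot.mk (holRel L π PM m) (invLp hPM a)) = _
    rw [Quot.map₂_mk]
    refine (qe _ _).2 ?_
    rw [L_cat_one hPM hL a (invLp hPM a) hx]
    have h1 : L a.val (L (invLp hPM a).val x 1) 1 = x := L_L_inv hPM hL a.2 hx
    have hc1 : L (cstLoop hPM m).val x 1 = x := L_const_one hPM hL hx
    rw [h1, hc1]
  · -- smoothness of multiplication
    intro n O g hg
    obtain ⟨⟨hO, H1⟩, ⟨-, H2⟩⟩ := hg
    refine ⟨hO, ?_⟩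
    intro z₀ hz₀
    obtain ⟨V₁, hV₁o, hz₁, hV₁s, p₁, hp₁, he₁⟩ := H1 z₀ hz₀
    obtain ⟨V₂, hV₂o, hz₂, hV₂s, p₂, hp₂, he₂⟩ := H2 z₀ hz₀
    refine ⟨V₁ ∩ V₂, hV₁o.inter hV₂o, ⟨hz₁, hz₂⟩, Set.inter_subset_left.trans hV₁s,
      fun w => catLp hPM (p₁ w) (p₂ w), ⟨hV₁o.inter hV₂o, ?_⟩, ?_⟩
    · have hplot₁ : PM {z : Eucl (n+1) | (WithLp.toLp 2 (fun i : Fin n => z i.castSucc)) ∈ V₁ ∩ V₂}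
          (fun z => (p₁ (WithLp.toLp 2 (fun i : Fin n => z i.castSucc))).val (z (Fin.last n))) :=
        plot_mono hPM hp₁.2 (isOpen_hcyl (hV₁o.inter hV₂o)) (fun z hz => hz.1)
      have hplot₂ : PM {z : Eucl (n+1) | (WithLp.toLp 2 (fun i : Fin n => z i.castSucc)) ∈ V₁ ∩ V₂}
          (fun z => (p₂ (WithLp.toLp 2 (fun i : Fin n => z i.castSucc))).val (z (Fin.last n))) :=
        plot_mono hPM hp₂.2 (isOpen_hcyl (hV₁o.inter hV₂o)) (fun z hz => hz.2)
      have pa : ∀ c d : ℝ, PM {z : Eucl (n+1) | (WithLp.toLp 2 (fun i : Fin n => z i.castSucc)) ∈ V₁ ∩ V₂}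
          (fun z => (p₁ (WithLp.toLp 2 (fun i : Fin n => z i.castSucc))).val (4 * (c * z (Fin.last n) + d) - 1)) := by
        intro c d
        have hψ : ContDiff ℝ (⊤ : ℕ∞) (fun t : ℝ => 4 * (c * t + d) - 1) :=
          (contDiff_const.mul ((contDiff_const.mul contDiff_id).add contDiff_const)).sub
            contDiff_const
        exact plot_reparam (q := fun w => (p₁ w).val) (V := V₁ ∩ V₂) hPM hψ hplot₁
      have pb : ∀ c d : ℝ, PM {z : Eucl (n+1) | (WithLp.toLp 2 (fun i : Fin n => z i.castSucc)) ∈ V₁ ∩ V₂}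
          (fun z => (p₂ (WithLp.toLp 2 (fun i : Fin n => z i.castSucc))).val (4 * (c * z (Fin.last n) + d) - 1)) := by
        intro c d
        have hψ : ContDiff ℝ (⊤ : ℕ∞) (fun t : ℝ => 4 * (c * t + d) - 1) :=
          (contDiff_const.mul ((contDiff_const.mul contDiff_id).add contDiff_const)).sub
            contDiff_const
        exact plot_reparam (q := fun w => (p₂ w).val) (V := V₁ ∩ V₂) hPM hψ hplot₂
      show PM {z : Eucl (n+1) | (WithLp.toLp 2 (fun i : Fin n => z i.castSucc)) ∈ V₁ ∩ V₂}
        (fun z => pathConcat (flatL ((p₁ (WithLp.toLp 2 (fun i : Fin n => z i.castSucc))).val))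
          (flatL ((p₂ (WithLp.toLp 2 (fun i : Fin n => z i.castSucc))).val)) (z (Fin.last n)))
      refine concat_plot hPM (fun z : Eucl (n+1) => z (Fin.last n))
        ((EuclideanSpace.proj (𝕜 := ℝ) (Fin.last n)).continuous)
        (fun z => flatL ((p₁ (WithLp.toLp 2 (fun i : Fin n => z i.castSucc))).val))
        (fun z => flatL ((p₂ (WithLp.toLp 2 (fun i : Fin n => z i.castSucc))).val))
        (ε := 1/4) (by norm_num) pa pb ?_ ?_ ?_
      · intro z hz t ht
        have l := (p₁ (WithLp.toLp 2 (fun i : Fin n => z i.castSucc))).2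
        show (p₁ (WithLp.toLp 2 (fun i : Fin n => z i.castSucc))).val (4*t - 1) =
          (p₁ (WithLp.toLp 2 (fun i : Fin n => z i.castSucc))).val (4*0 - 1)
        rw [loop_outside l _ (Or.inl (by linarith)), loop_outside l _ (Or.inl (by norm_num))]
      · intro z hz t ht
        have l := (p₂ (WithLp.toLp 2 (fun i : Fin n => z i.castSucc))).2
        show (p₂ (WithLp.toLp 2 (fun i : Fin n => z i.castSucc))).val (4*t - 1) =
          (p₂ (WithLp.toLp 2 (fun i : Fin n => z i.castSucc))).val (4*1 - 1)
        rw [loop_outside l _ (Or.inr (by linarith)), loop_outside l _ (Or.inr (by norm_num))]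
      · intro z hz
        have l1 := (p₁ (WithLp.toLp 2 (fun i : Fin n => z i.castSucc))).2
        have l2 := (p₂ (WithLp.toLp 2 (fun i : Fin n => z i.castSucc))).2
        show (p₂ (WithLp.toLp 2 (fun i : Fin n => z i.castSucc))).val (4*1 - 1) =
          (p₁ (WithLp.toLp 2 (fun i : Fin n => z i.castSucc))).val (4*0 - 1)
        rw [loop_outside l2 _ (Or.inr (by norm_num)), loop_outside l1 _ (Or.inl (by norm_num))]
    · intro w hw
      show Quot.map₂ (catLp hPM) hr hs (g w).1 (g w).2 =
        Quot.mk (holRel L π PM m) (catLp hPM (p₁ w) (p₂ w))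
      have e1 : (g w).1 = Quot.mk (holRel L π PM m) (p₁ w) := he₁ hw.1
      have e2 : (g w).2 = Quot.mk (holRel L π PM m) (p₂ w) := he₂ hw.2
      rw [e1, e2, Quot.map₂_mk]
  · -- smoothness of inversion
    intro n O g hg
    obtain ⟨hO, H⟩ := hg
    refine ⟨hO, ?_⟩
    intro z₀ hz₀
    obtain ⟨V, hVo, hzV, hVs, p, hp, he⟩ := H z₀ hz₀
    refine ⟨V, hVo, hzV, hVs, fun w => invLp hPM (p w), ⟨hVo, ?_⟩, ?_⟩
    · have hψ : ContDiff ℝ (⊤ : ℕ∞) (fun t : ℝ => 1 - t) := contDiff_const.sub contDiff_id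
      exact plot_reparam (q := fun w => (p w).val) (V := V) hPM hψ hp.2
    · intro w hw
      have e1 : g w = Quot.mk (holRel L π PM m) (p w) := he hw
      show Quot.lift (fun a => Quot.mk (holRel L π PM m) (invLp hPM a))
        (fun a b h => Quot.sound (hi a b h)) (g w) =
        Quot.mk (holRel L π PM m) (invLp hPM (p w))
      rw [e1]
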